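/- arXiv:2206.11810 — 3 statements merged into one kernel-verified Lean document; each statement's English description precedes it below -/
import Mathlib

section
/- Let s_1, ..., s_{n+1} be exchangeable real-valued random variables that are almost surely distinct. Let q̂ be the ⌈(n+1)(1-α)⌉-th smallest value among s_1, ..., s_n, for α ∈ (0,1) with ⌈(n+1)(1-α)⌉ ≤ n. Then P(s_{n+1} ≤ q̂) ≥ 1 - α. -/
open MeasureTheory

/-- A finite family of real random variables is exchangeable if its joint law is
invariant under every permutation of the indices. -/
def Exchangeable {Ω : Type*} [MeasurableSpace Ω] {m : ℕ} (P : Measure Ω)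
    (s : Fin m → Ω → ℝ) : Prop :=
  ∀ σ : Equiv.Perm (Fin m),
    Measure.map (fun ω i => s (σ i) ω) P = Measure.map (fun ω i => s i ω) P

/-- The `k`-th smallest value (0-indexed) of the tuple `v`. -/
noncomputable def orderStat {m : ℕ} (v : Fin m → ℝ) (k : Fin m) : ℝ :=
  v (Tuple.sort v k)

/-!
Let `r_j` be the number of scores strictly below `s_j`. In every realisation at least `l`
indices have `r_j < l`, namely the first `l` in sorted order (ties included), so the
probabilities of the events `{r_j < l}` add up to at least `l`; by exchangeability they are all
equal, hence `P(r_{n+1} < l) ≥ l / (n + 1) ≥ 1 - α`. On that event fewer than `l` calibration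
scores lie strictly below `s_{n+1}`, which forces `s_{n+1} ≤ q̂`.
-/

open Finset
open scoped ENNReal

section Rank

variable {α : Type*} [LinearOrder α] {m : ℕ}

noncomputable def rank (v : Fin m → α) (j : Fin m) : ℕ := #{i | v i < v j}

lemma rank_comp_perm (v : Fin m → α) (σ : Equiv.Perm (Fin m)) (j : Fin m) :
    rank (v ∘ σ) j = rank v (σ j) :=
  card_equiv σ (by simp)

lemma card_filter_comp_sort_lt (v : Fin m → α) (a : α) :
    #{i | v (Tuple.sort v i) < a} = #{i | v i < a} :=
  card_equiv (Tuple.sort v) (by simp)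

lemma rank_sort_le (v : Fin m → α) (p : Fin m) : rank v (Tuple.sort v p) ≤ p := by
  rw [rank, ← card_filter_comp_sort_lt, ← not_lt]
  exact (Tuple.lt_card_lt_iff_apply_lt_of_monotone (Tuple.monotone_sort v)).not.2 (lt_irrefl _)

lemma le_card_filter_rank_lt (v : Fin m → α) {l : ℕ} (hl : l ≤ m) : l ≤ #{j | rank v j < l} :=
  calc l = #{p : Fin m | (p : ℕ) < l} := by simp [Fin.card_filter_val_lt, hl]
    _ ≤ #{j | rank v j < l} :=
      card_le_card_of_injOn (Tuple.sort v)
        (fun p hp => by simpa using (rank_sort_le v p).trans_lt (by simpa using hp))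
        (Tuple.sort v).injective.injOn

end Rank

lemma orderStat_lt_iff {m : ℕ} (w : Fin m → ℝ) (k : Fin m) (x : ℝ) :
    orderStat w k < x ↔ (k : ℕ) < #{i | w i < x} := by
  rw [← card_filter_comp_sort_lt]
  exact (Tuple.lt_card_lt_iff_apply_lt_of_monotone (Tuple.monotone_sort w)).symm

lemma le_orderStat_iff {m : ℕ} (w : Fin m → ℝ) (k : Fin m) (x : ℝ) :
    x ≤ orderStat w k ↔ #{i | w i < x} ≤ k := by
  simpa only [not_lt] using (orderStat_lt_iff w k x).not

lemma last_le_orderStat_init_of_rank_le {n : ℕ} (v : Fin (n + 1) → ℝ) (k : Fin n)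
    (h : rank v (Fin.last n) ≤ k) :
    v (Fin.last n) ≤ orderStat (fun i : Fin n => v i.castSucc) k := by
  rw [le_orderStat_iff]
  refine le_trans ?_ h
  exact card_le_card_of_injOn Fin.castSucc (fun i hi => by simpa using hi)
    (Fin.castSucc_injective n).injOn

lemma measurable_rank {m : ℕ} (j : Fin m) : Measurable fun v : Fin m → ℝ => rank v j := by
  simp_rw [rank, card_filter]
  exact Finset.measurable_sum _ fun i _ => Measurable.ite
    (measurableSet_lt (measurable_pi_apply i) (measurable_pi_apply j))
    measurable_const measurable_const

lemma natCast_mul_measure_univ_le_sum {Ω ι : Type*} [MeasurableSpace Ω] [Fintype ι]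
    (μ : Measure Ω) {p : ι → Ω → Prop} [∀ i ω, Decidable (p i ω)]
    (hp : ∀ i, MeasurableSet {ω | p i ω}) {l : ℕ} (hl : ∀ ω, l ≤ #{i | p i ω}) :
    l * μ Set.univ ≤ ∑ i, μ {ω | p i ω} :=
  calc (l : ℝ≥0∞) * μ Set.univ = ∫⁻ _, (l : ℝ≥0∞) ∂μ := (lintegral_const _).symm
    _ ≤ ∫⁻ ω, ∑ i, {ω | p i ω}.indicator 1 ω ∂μ := lintegral_mono fun ω => by
        simp only [Set.indicator_apply, Set.mem_ofPred_eq, Pi.one_apply, sum_boole]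
        exact Nat.cast_le.2 (hl ω)
    _ = ∑ i, μ {ω | p i ω} := by
        rw [lintegral_finsetSum _ fun i _ => measurable_one.indicator (hp i)]
        simp only [lintegral_indicator_one (hp _)]

namespace Exchangeable

variable {Ω : Type*} [MeasurableSpace Ω] {P : Measure Ω} {m : ℕ} {s : Fin m → Ω → ℝ}

lemma measure_preimage_comp_perm (hexch : Exchangeable P s) (hmeas : ∀ i, Measurable (s i))
    (σ : Equiv.Perm (Fin m)) {B : Set (Fin m → ℝ)} (hB : MeasurableSet B) :
    P ((fun ω i => s (σ i) ω) ⁻¹' B) = P ((fun ω i => s i ω) ⁻¹' B) := by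
  rw [← Measure.map_apply (by fun_prop) hB, hexch σ, Measure.map_apply (by fun_prop) hB]

lemma measure_rank_lt_eq (hexch : Exchangeable P s) (hmeas : ∀ i, Measurable (s i))
    (j j' : Fin m) (l : ℕ) :
    P {ω | rank (fun i => s i ω) j < l} = P {ω | rank (fun i => s i ω) j' < l} := by
  refine Eq.trans ?_ (hexch.measure_preimage_comp_perm hmeas (Equiv.swap j j')
    (measurable_rank j' measurableSet_Iio))
  congr 1
  ext ω
  change rank (fun i => s i ω) j < l ↔ rank ((fun i => s i ω) ∘ Equiv.swap j j') j' < l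
  rw [rank_comp_perm, Equiv.swap_apply_right]

lemma div_le_measure_rank_lt [IsProbabilityMeasure P] (hexch : Exchangeable P s)
    (hmeas : ∀ i, Measurable (s i)) (j : Fin m) {l : ℕ} (hl : l ≤ m) :
    (l : ℝ≥0∞) / m ≤ P {ω | rank (fun i => s i ω) j < l} := by
  have hS : Measurable fun ω i => s i ω := measurable_pi_lambda _ hmeas
  have hsum := natCast_mul_measure_univ_le_sum P (p := fun i ω => rank (fun k => s k ω) i < l)
    (fun i => hS (measurable_rank i measurableSet_Iio)) fun ω => le_card_filter_rank_lt _ hl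
  simp only [measure_univ, mul_one, hexch.measure_rank_lt_eq hmeas _ j, sum_const, card_univ,
    Fintype.card_fin, nsmul_eq_mul] at hsum
  exact ENNReal.div_le_of_le_mul' hsum

end Exchangeable

lemma ofReal_le_natCeil_mul_div {c : ℕ} (hc : 0 < c) (x : ℝ) :
    ENNReal.ofReal x ≤ (⌈(c : ℝ) * x⌉₊ : ℝ≥0∞) / c := by
  rw [ENNReal.le_div_iff_mul_le (by simp [hc.ne']) (by simp)]
  calc ENNReal.ofReal x * c = ENNReal.ofReal (c * x) := by
        rw [mul_comm (c : ℝ), ENNReal.ofReal_mul' (by positivity), ENNReal.ofReal_natCast]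
    _ ≤ ENNReal.ofReal ⌈(c : ℝ) * x⌉₊ := ENNReal.ofReal_le_ofReal (Nat.le_ceil _)
    _ = _ := ENNReal.ofReal_natCast _

/-- Marginal coverage lower bound for split conformal prediction:
if `s 0, …, s n` are exchangeable and a.s. distinct, and `q̂` is the
`⌈(n+1)(1-α)⌉`-th smallest of the first `n` scores, then
`P(s_{n+1} ≤ q̂) ≥ 1 - α`. -/
theorem conformal_marginal_coverage_lower
    {Ω : Type*} [MeasurableSpace Ω] (P : Measure Ω) [IsProbabilityMeasure P]
    {n : ℕ} (s : Fin (n + 1) → Ω → ℝ) (hmeas : ∀ i, Measurable (s i))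
    (hexch : Exchangeable P s)
    (α : ℝ)
    (l : ℕ) (hl : l = ⌈((n : ℝ) + 1) * (1 - α)⌉₊) (hl1 : 1 ≤ l) (hln : l ≤ n)
    (qhat : Ω → ℝ)
    (hq : ∀ ω, qhat ω =
      orderStat (fun i : Fin n => s i.castSucc ω) ⟨l - 1, by omega⟩) :
    ENNReal.ofReal (1 - α) ≤ P {ω | s (Fin.last n) ω ≤ qhat ω} := by
  have hcover : {ω | rank (fun i => s i ω) (Fin.last n) < l} ⊆
      {ω | s (Fin.last n) ω ≤ qhat ω} := fun ω hω => by
    change rank (fun i => s i ω) (Fin.last n) < l at hω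
    change s (Fin.last n) ω ≤ qhat ω
    rw [hq ω]
    exact last_le_orderStat_init_of_rank_le (fun i => s i ω) ⟨l - 1, by omega⟩
      (show _ ≤ l - 1 by omega)
  calc ENNReal.ofReal (1 - α) ≤ (l : ℝ≥0∞) / (n + 1 : ℕ) := by
        simpa only [hl, Nat.cast_succ] using ofReal_le_natCeil_mul_div n.succ_pos (1 - α)
    _ ≤ P {ω | rank (fun i => s i ω) (Fin.last n) < l} :=
        hexch.div_le_measure_rank_lt hmeas _ (by omega)
    _ ≤ _ := measure_mono hcover
end

section
/- If s_1, ..., s_{n+1} are exchangeable and almost surely distinct, then the rank of s_{n+1} among s_1, ..., s_{n+1} is uniformly distributed on {1, 2, ..., n+1}. -/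
open MeasureTheory

lemma card_filter_perm {m : ℕ} (p : Fin m → Prop) [DecidablePred p] (σ : Equiv.Perm (Fin m)) :
    (Finset.univ.filter fun j => p (σ j)).card = (Finset.univ.filter p).card := by
  apply Finset.card_bij (fun j _ => σ j)
  · intro a ha; simp only [Finset.mem_filter, Finset.mem_univ, true_and] at ha ⊢; exact ha
  · intro a _ b _ h; exact σ.injective h
  · intro b hb
    refine ⟨σ.symm b, ?_, by simp⟩
    simp only [Finset.mem_filter, Finset.mem_univ, true_and, Equiv.apply_symm_apply] at hb ⊢
    exact hb

/-- Uniform rank: if `s 0, …, s n` are exchangeable and a.s. distinct, then the rank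
of the last one among all `n+1` (the number of `j` with `s j ≤ s (last)`) is uniform
on `{1, …, n+1}`. -/
theorem rank_uniform
    {Ω : Type*} [MeasurableSpace Ω] (P : Measure Ω) [IsProbabilityMeasure P]
    {n : ℕ} (s : Fin (n + 1) → Ω → ℝ) (hmeas : ∀ i, Measurable (s i))
    (hexch : Exchangeable P s)
    (hdist : ∀ᵐ ω ∂P, Function.Injective fun i => s i ω)
    (rank : Ω → ℕ)
    (hrank : ∀ ω, rank ω =
      (Finset.univ.filter fun j : Fin (n + 1) => s j ω ≤ s (Fin.last n) ω).card) :
    ∀ k ∈ Finset.Icc 1 (n + 1), P {ω | rank ω = k} = ((n : ENNReal) + 1)⁻¹ := by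
  intro k hk
  rw [Finset.mem_Icc] at hk
  -- rank of s i among all
  set R : Fin (n + 1) → Ω → ℕ :=
    fun i ω => (Finset.univ.filter fun j : Fin (n + 1) => s j ω ≤ s i ω).card with hR
  have hmeasR : ∀ i, Measurable (R i) := by
    intro i
    have : R i = fun ω => ∑ j : Fin (n + 1), if s j ω ≤ s i ω then 1 else 0 := by
      funext ω
      show (Finset.univ.filter fun j : Fin (n + 1) => s j ω ≤ s i ω).card = _
      rw [Finset.card_filter]
    rw [this]
    exact Finset.measurable_sum _ fun j _ =>
      Measurable.ite (measurableSet_le (hmeas j) (hmeas i)) measurable_const measurable_const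
  -- the statistic on path space
  set F : (Fin (n + 1) → ℝ) → ℕ :=
    fun v => (Finset.univ.filter fun j : Fin (n + 1) => v j ≤ v (Fin.last n)).card with hF
  have hmeasF : Measurable F := by
    have : F = fun v => ∑ j : Fin (n + 1), if v j ≤ v (Fin.last n) then 1 else 0 := by
      funext v
      show (Finset.univ.filter fun j : Fin (n + 1) => v j ≤ v (Fin.last n)).card = _
      rw [Finset.card_filter]
    rw [this]
    exact Finset.measurable_sum _ fun j _ =>
      Measurable.ite (measurableSet_le (measurable_pi_apply j) (measurable_pi_apply _))
        measurable_const measurable_const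
  have hmeasVec : Measurable fun ω (j : Fin (n + 1)) => s j ω :=
    measurable_pi_lambda _ fun j => hmeas j
  -- step 2: all ranks have the same distribution
  have hsame : ∀ i : Fin (n + 1), P {ω | R i ω = k} = P {ω | R (Fin.last n) ω = k} := by
    intro i
    set σ : Equiv.Perm (Fin (n + 1)) := Equiv.swap i (Fin.last n) with hσ
    have hmeasVecσ : Measurable fun ω (j : Fin (n + 1)) => s (σ j) ω :=
      measurable_pi_lambda _ fun j => hmeas (σ j)
    have hFk : MeasurableSet {v : Fin (n + 1) → ℝ | F v = k} :=
      hmeasF (measurableSet_singleton k)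
    have h1 : P ((fun ω (j : Fin (n + 1)) => s (σ j) ω) ⁻¹' {v | F v = k})
        = P ((fun ω (j : Fin (n + 1)) => s j ω) ⁻¹' {v | F v = k}) := by
      rw [← Measure.map_apply hmeasVecσ hFk, ← Measure.map_apply hmeasVec hFk, hexch σ]
    have h2 : (fun ω (j : Fin (n + 1)) => s (σ j) ω) ⁻¹' {v | F v = k} = {ω | R i ω = k} := by
      ext ω
      simp only [Set.mem_preimage, Set.mem_setOf_eq, hF, hR]
      have hlast : σ (Fin.last n) = i := Equiv.swap_apply_right _ _
      have heq : (Finset.univ.filter fun j => s (σ j) ω ≤ s (σ (Fin.last n)) ω)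
          = (Finset.univ.filter fun j => s (σ j) ω ≤ s i ω) := by
        apply Finset.filter_congr; intro j _; rw [hlast]
      rw [heq, card_filter_perm (fun j => s j ω ≤ s i ω) σ]
    have h3 : (fun ω (j : Fin (n + 1)) => s j ω) ⁻¹' {v | F v = k}
        = {ω | R (Fin.last n) ω = k} := by
      ext ω; simp only [Set.mem_preimage, Set.mem_setOf_eq, hF, hR]
    rw [← h2, ← h3, h1]
  -- step 3: for injective ω, ranks are a bijection onto Icc 1 (n+1)
  have hmono : ∀ ω, ∀ i i' : Fin (n + 1), s i ω < s i' ω → R i ω < R i' ω := by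
    intro ω i i' hlt
    apply Finset.card_lt_card
    constructor
    · intro j hj
      simp only [Finset.mem_filter, Finset.mem_univ, true_and] at hj ⊢
      exact hj.trans hlt.le
    · intro hsub
      have : i' ∈ Finset.univ.filter fun j => s j ω ≤ s i' ω := by
        simp
      have := hsub this
      simp only [Finset.mem_filter, Finset.mem_univ, true_and] at this
      exact absurd (this.trans_lt hlt) (lt_irrefl _)
  have hinjR : ∀ ω, Function.Injective (fun i => s i ω) → Function.Injective (fun i => R i ω) := by
    intro ω hinj i i' h
    by_contra hne
    rcases lt_trichotomy (s i ω) (s i' ω) with hlt | heq | hgt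
    · exact absurd h (Nat.ne_of_lt (hmono ω i i' hlt))
    · exact hne (hinj heq)
    · exact absurd h.symm (Nat.ne_of_lt (hmono ω i' i hgt))
  have hexists : ∀ ω, Function.Injective (fun i => s i ω) → ∃ i, R i ω = k := by
    intro ω hinj
    have hsub : (Finset.univ.image fun i => R i ω) ⊆ Finset.Icc 1 (n + 1) := by
      intro m hm
      rw [Finset.mem_image] at hm
      obtain ⟨i, _, hi⟩ := hm
      rw [Finset.mem_Icc, ← hi, hR]
      constructor
      · refine Finset.card_pos.mpr ⟨i, ?_⟩
        simp
      · exact (Finset.card_filter_le _ _).trans (by simp)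
    have hcard : (Finset.univ.image fun i => R i ω).card = n + 1 := by
      rw [Finset.card_image_of_injective _ (hinjR ω hinj)]
      simp
    have heq : (Finset.univ.image fun i => R i ω) = Finset.Icc 1 (n + 1) := by
      apply Finset.eq_of_subset_of_card_le hsub
      rw [hcard, Nat.card_Icc]
      omega
    have : k ∈ Finset.univ.image fun i => R i ω := by
      rw [heq, Finset.mem_Icc]; exact hk
    rw [Finset.mem_image] at this
    obtain ⟨i, _, hi⟩ := this
    exact ⟨i, hi⟩
  -- step 4
  set A : Fin (n + 1) → Set Ω := fun i => {ω | R i ω = k} with hA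
  have hmeasA : ∀ i, MeasurableSet (A i) := fun i => hmeasR i (measurableSet_singleton k)
  have hnull : P {ω | ¬ Function.Injective fun i => s i ω} = 0 := by
    have := ae_iff.mp hdist
    simpa using this
  have hdisj : Pairwise (Function.onFun (MeasureTheory.AEDisjoint P) A) := by
    intro i i' hne
    refine measure_mono_null ?_ hnull
    intro ω hω
    simp only [Set.mem_inter_iff, hA, Set.mem_setOf_eq] at hω
    intro hinj
    exact hne (hinjR ω hinj (hω.1.trans hω.2.symm))
  have hunion : P (⋃ i, A i) = 1 := by
    have hcompl : (⋃ i, A i)ᶜ ⊆ {ω | ¬ Function.Injective fun i => s i ω} := by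
      intro ω hω hinj
      obtain ⟨i, hi⟩ := hexists ω hinj
      exact hω (Set.mem_iUnion.mpr ⟨i, hi⟩)
    have h0 : P ((⋃ i, A i)ᶜ) = 0 := measure_mono_null hcompl hnull
    exact (prob_compl_eq_zero_iff (MeasurableSet.iUnion hmeasA)).mp h0
  have hsum : P (⋃ i, A i) = ∑ i : Fin (n + 1), P (A i) := by
    rw [measure_iUnion₀ hdisj (fun i => (hmeasA i).nullMeasurableSet), tsum_fintype]
  have hconst : ∑ i : Fin (n + 1), P (A i) = ((n : ENNReal) + 1) * P (A (Fin.last n)) := by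
    rw [Finset.sum_congr rfl (fun i _ => hsame i), Finset.sum_const, Finset.card_univ,
      Fintype.card_fin, nsmul_eq_mul]
    push_cast
    ring
  have hkey : ((n : ENNReal) + 1) * P (A (Fin.last n)) = 1 := by
    rw [← hconst, ← hsum, hunion]
  have hfinal : P (A (Fin.last n)) = ((n : ENNReal) + 1)⁻¹ := by
    have hne : ((n : ENNReal) + 1) ≠ 0 := by simp
    have hnetop : ((n : ENNReal) + 1) ≠ ⊤ :=
      ENNReal.add_ne_top.mpr ⟨ENNReal.natCast_ne_top n, ENNReal.one_ne_top⟩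
    calc P (A (Fin.last n)) = (((n : ENNReal) + 1)⁻¹ * ((n : ENNReal) + 1)) * P (A (Fin.last n)) := by
          rw [ENNReal.inv_mul_cancel hne hnetop, one_mul]
      _ = ((n : ENNReal) + 1)⁻¹ * (((n : ENNReal) + 1) * P (A (Fin.last n))) := by ring
      _ = ((n : ENNReal) + 1)⁻¹ := by rw [hkey, mul_one]
  have hsets : {ω | rank ω = k} = A (Fin.last n) := by
    ext ω
    simp only [Set.mem_setOf_eq, hA, hR, hrank ω]
  rw [hsets, hfinal]
end

section
/- Let p ∈ (0,1)^K with Σ p_i = 1, let π be the permutation sorting p in descending order, and define the APS set C = {classes included in descending order of p until the cumulative sum first reaches q̂}, for q̂ ∈ (0,1]. Then among all subsets S of {1,...,K} with Σ_{i∈S} p_i ≥ q̂, the APS set C has minimal cardinality. -/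
open Finset

lemma fin_strictMono_le {m K : ℕ} {f : Fin m → Fin K} (hf : StrictMono f) :
    ∀ j : Fin m, (j : ℕ) ≤ (f j : ℕ) := by
  intro j
  induction' hn : (j : ℕ) with n ih generalizing j
  · exact Nat.zero_le _
  · have hj' : n < m := lt_trans (by omega) (hn ▸ j.isLt)
    have h1 : n ≤ (f ⟨n, hj'⟩ : ℕ) := ih _ rfl
    have h2 : f ⟨n, hj'⟩ < f j := hf (by simp [Fin.lt_def, hn])
    have := Fin.lt_def.mp h2
    omega

/-- Sum of an antitone function over any finset is at most the sum over the initial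
segment of the same cardinality. -/
lemma sum_le_sum_initial {K : ℕ} (q : Fin K → ℝ) (hq : ∀ i j : Fin K, i ≤ j → q j ≤ q i)
    (T : Finset (Fin K)) :
    ∑ i ∈ T, q i ≤ ∑ i ∈ Finset.univ.filter (fun i : Fin K => (i : ℕ) < T.card), q i := by
  set m := T.card with hm
  have hmK : m ≤ K := by simpa using T.card_le_univ
  have hf : StrictMono (T.orderEmbOfFin hm.symm) := (T.orderEmbOfFin hm.symm).strictMono
  have hT : T = Finset.univ.image (T.orderEmbOfFin hm.symm) := by
    ext x
    simp only [mem_image, mem_univ, true_and]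
    constructor
    · intro hx
      have : x ∈ Set.range (T.orderEmbOfFin hm.symm) := by
        rw [Finset.range_orderEmbOfFin]; exact hx
      exact this
    · rintro ⟨j, rfl⟩; exact Finset.orderEmbOfFin_mem T hm.symm j
  have hfilt : Finset.univ.filter (fun i : Fin K => (i : ℕ) < m)
      = Finset.univ.image (Fin.castLE hmK) := by
    ext x
    simp only [mem_filter, mem_univ, true_and, mem_image]
    constructor
    · intro hx; exact ⟨⟨x, hx⟩, rfl⟩
    · rintro ⟨j, rfl⟩; exact j.isLt
  rw [hT, hfilt, Finset.sum_image (fun a _ b _ h => hf.injective h),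
    Finset.sum_image (fun a _ b _ h => by simpa [Fin.ext_iff, Fin.castLE] using h)]
  apply Finset.sum_le_sum
  intro j _
  exact hq _ _ (by simpa [Fin.le_def] using fin_strictMono_le hf j)

/-- Adaptive prediction sets (APS) are minimal: for a probability vector `p` over `K`
classes sorted in descending order by the permutation `σ`, the greedy set formed by
including classes in descending order of probability until the cumulative sum first
reaches `q̂` has cumulative mass at least `q̂` and has minimal cardinality among all
subsets whose total mass is at least `q̂`. -/
theorem aps_greedy_minimal {K : ℕ} (p : Fin K → ℝ)
    (hp : ∀ i, p i ∈ Set.Ioo (0 : ℝ) 1) (hsum : ∑ i, p i = 1)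
    (σ : Equiv.Perm (Fin K))
    (hσ : ∀ i j : Fin K, i ≤ j → p (σ j) ≤ p (σ i))
    (qhat : ℝ) (hq : qhat ∈ Set.Ioc (0 : ℝ) 1)
    (k : ℕ)
    (hk : k = sInf {m : ℕ |
      qhat ≤ ∑ i ∈ Finset.univ.filter (fun i : Fin K => (i : ℕ) < m), p (σ i)})
    (C : Finset (Fin K))
    (hC : C = (Finset.univ.filter fun i : Fin K => (i : ℕ) < k).image σ) :
    qhat ≤ ∑ i ∈ C, p i ∧
    ∀ S : Finset (Fin K), qhat ≤ ∑ i ∈ S, p i → C.card ≤ S.card := by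
  set M : Set ℕ := {m : ℕ |
    qhat ≤ ∑ i ∈ Finset.univ.filter (fun i : Fin K => (i : ℕ) < m), p (σ i)} with hM
  have hKmem : K ∈ M := by
    have : Finset.univ.filter (fun i : Fin K => (i : ℕ) < K) = Finset.univ := by
      ext x; simp [x.isLt]
    simp only [hM, Set.mem_setOf_eq, this]
    rw [Equiv.sum_comp σ p, hsum]
    exact hq.2
  have hne : M.Nonempty := ⟨K, hKmem⟩
  have hkmem : k ∈ M := hk ▸ Nat.sInf_mem hne
  have hCsum : ∑ i ∈ C, p i = ∑ i ∈ Finset.univ.filter (fun i : Fin K => (i : ℕ) < k), p (σ i) := by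
    rw [hC, Finset.sum_image (fun a _ b _ h => σ.injective h)]
  have hCcard : C.card = min k K := by
    rw [hC, Finset.card_image_of_injective _ σ.injective]
    have : Finset.univ.filter (fun i : Fin K => (i : ℕ) < k)
        = Finset.univ.image (fun j : Fin (min k K) => Fin.castLE (min_le_right k K) j) := by
      ext x
      simp only [mem_filter, mem_univ, true_and, mem_image]
      constructor
      · intro hx; exact ⟨⟨x, lt_min hx x.isLt⟩, rfl⟩
      · rintro ⟨j, rfl⟩; exact lt_of_lt_of_le j.isLt (min_le_left k K)
    rw [this, Finset.card_image_of_injective _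
      (fun a b h => by simpa [Fin.ext_iff, Fin.castLE] using h)]
    simp
  constructor
  · rw [hCsum]; exact hkmem
  · intro S hS
    have hTsum : ∑ i ∈ S, p i = ∑ j ∈ S.image σ.symm, p (σ j) := by
      rw [Finset.sum_image (fun a _ b _ h => σ.symm.injective h)]
      simp
    have hle := sum_le_sum_initial (fun j => p (σ j)) (fun i j hij => hσ i j hij) (S.image σ.symm)
    have hcard : (S.image σ.symm).card = S.card :=
      Finset.card_image_of_injective _ σ.symm.injective
    have hmem : S.card ∈ M := by
      simp only [hM, Set.mem_setOf_eq]
      calc qhat ≤ ∑ i ∈ S, p i := hS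
        _ = ∑ j ∈ S.image σ.symm, p (σ j) := hTsum
        _ ≤ _ := by rw [← hcard]; exact hle
    have : k ≤ S.card := hk ▸ Nat.sInf_le hmem
    calc C.card = min k K := hCcard
      _ ≤ k := min_le_left _ _
      _ ≤ S.card := this
end
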